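/- arXiv:0812.1726 — 2 statements merged into one kernel-verified Lean document; each statement's English description precedes it below -/
import Mathlib

section
/- Let (τ_k)_{k≥0} be an increasing sequence of stopping times and (δ_k)_{k≥1} positive reals with Σ_k δ_k = ∞. Suppose that for every k ≥ 1, P(τ_k − τ_{k−1} ≥ δ_k | F_{τ_{k−1}}) ≥ 1/4 almost surely on {τ_{k−1} < ∞}. Then Σ_{k=1}^∞ (τ_k − τ_{k−1}) = ∞ almost surely on the event {τ_k < ∞ for all k}. -/
open MeasureTheory Filter
open scoped ENNReal NNReal

/-! Put `s_k = {τ_k - τ_{k-1} ≥ δ_k}`; it is `F_{τ_k}`-measurable since both `τ_{k-1} ≤ τ_k`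
are. Along the filtration `F_{τ_k}`, Lévy's conditional Borel–Cantelli lemma applies to the
bounded-increment process `∑_k min(δ_k, 1) 1_{s_k}`: it diverges exactly where
`∑_k min(δ_k, 1) P(s_k | F_{τ_{k-1}})` does, and on `{τ_k < ∞ ∀ k}` the latter is at least
`(1/4) ∑_k min(δ_k, 1) = ∞`. Since `τ_k - τ_{k-1} ≥ min(δ_k, 1) 1_{s_k}`, the increments of `τ`
sum to `∞`. -/

theorem tendsto_sum_range_min_one_atTop {a : ℕ → ℝ} (ha : ∀ k, 0 ≤ a k)
    (h : Tendsto (fun n => ∑ k ∈ Finset.range n, a k) atTop atTop) :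
    Tendsto (fun n => ∑ k ∈ Finset.range n, min (a k) 1) atTop atTop := by
  rw [← not_summable_iff_tendsto_nat_atTop_of_nonneg ha] at h
  rw [← not_summable_iff_tendsto_nat_atTop_of_nonneg fun k => le_min (ha k) zero_le_one]
  intro hsum
  refine h (hsum.congr_atTop ?_)
  filter_upwards [hsum.tendsto_atTop_zero.eventually (gt_mem_nhds zero_lt_one)] with k hk
  exact min_eq_left (min_lt_iff.1 hk |>.resolve_right (lt_irrefl 1)).le

theorem ENNReal.tsum_eq_top_of_ofReal_le {x : ℕ → ℝ≥0∞} {b : ℕ → ℝ} (hb : ∀ k, 0 ≤ b k)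
    (hbx : ∀ k, ENNReal.ofReal (b k) ≤ x k)
    (h : Tendsto (fun n => ∑ k ∈ Finset.range n, b k) atTop atTop) : ∑' k, x k = ⊤ := by
  rw [← not_summable_iff_tendsto_nat_atTop_of_nonneg hb] at h
  refine top_unique (le_of_eq_of_le ?_ (ENNReal.tsum_le_tsum hbx))
  by_contra hne
  refine h ((NNReal.summable_coe.2 (ENNReal.tsum_coe_ne_top_iff_summable.1 (Ne.symm hne))).congr
    fun k => Real.coe_toNNReal _ (hb k))

section LevyBorelCantelli

variable {Ω : Type*} {m0 : MeasurableSpace Ω} {μ : Measure Ω} [IsFiniteMeasure μ]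
  {ℱ : Filtration ℕ m0} {s : ℕ → Set Ω}

theorem tendsto_sum_mul_indicator_atTop_iff (hs : ∀ n, MeasurableSet[ℱ n] (s n)) {c : ℕ → ℝ}
    {R : ℝ≥0} (hc0 : ∀ k, 0 ≤ c k) (hcR : ∀ k, c k ≤ R) :
    ∀ᵐ ω ∂μ, Tendsto (fun n => ∑ k ∈ Finset.range n, c k * (s (k + 1)).indicator 1 ω)
        atTop atTop ↔
      Tendsto (fun n => ∑ k ∈ Finset.range n, c k * (μ[(s (k + 1)).indicator 1 | ℱ k]) ω)
        atTop atTop := by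
  set f : ℕ → Ω → ℝ := fun n => ∑ k ∈ Finset.range n, c k • (s (k + 1)).indicator 1
  have hf : ∀ n ω, f n ω = ∑ k ∈ Finset.range n, c k * (s (k + 1)).indicator 1 ω := by
    intro n ω
    simp only [f, Finset.sum_apply, Pi.smul_apply, smul_eq_mul]
  have hdiff : ∀ n, f (n + 1) - f n = c n • (s (n + 1)).indicator 1 := fun n => by
    simp only [f, Finset.sum_range_succ, add_sub_cancel_left]
  have hincr : ∀ n ω, 0 ≤ f (n + 1) ω - f n ω ∧ f (n + 1) ω - f n ω ≤ R := by
    intro n ω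
    rw [← Pi.sub_apply, hdiff, Pi.smul_apply, smul_eq_mul]
    have h1 := Set.indicator_le_self' (s := s (n + 1)) (f := (1 : Ω → ℝ)) (fun _ _ => zero_le_one) ω
    exact ⟨mul_nonneg (hc0 n) (Set.indicator_nonneg (fun _ _ => zero_le_one) ω),
      (mul_le_of_le_one_right (hc0 n) h1).trans (hcR n)⟩
  have hadapted : StronglyAdapted ℱ f := fun n =>
    Finset.stronglyMeasurable_sum _ fun k hk =>
      ((stronglyMeasurable_one.indicator (hs (k + 1))).mono
        (ℱ.mono (Finset.mem_range.1 hk))).const_smul _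
  have hint : ∀ n, Integrable (f n) μ := fun n =>
    integrable_finsetSum' _ fun k _ =>
      ((integrable_const 1).indicator (ℱ.le _ _ (hs (k + 1)))).smul _
  have hpred : ∀ᵐ ω ∂μ, ∀ n, predictablePart f ℱ μ n ω =
      ∑ k ∈ Finset.range n, c k * (μ[(s (k + 1)).indicator 1 | ℱ k]) ω := by
    filter_upwards [ae_all_iff.2 fun k => hdiff k ▸ condExp_smul (μ := μ) (c k)
      ((s (k + 1)).indicator (1 : Ω → ℝ)) (ℱ k)] with ω hω n
    simp only [predictablePart, Finset.sum_apply, hω, Pi.smul_apply, smul_eq_mul]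
  filter_upwards [tendsto_sum_indicator_atTop_iff
      (Eventually.of_forall fun ω n => sub_nonneg.1 (hincr n ω).1) hadapted hint
      (Eventually.of_forall fun ω n => (abs_of_nonneg (hincr n ω).1).trans_le (hincr n ω).2),
      hpred] with ω hω hpredω
  simpa only [hf, hpredω] using hω

end LevyBorelCantelli

section StoppedSigmaAlgebra

variable {Ω : Type*} {m0 : MeasurableSpace Ω} {ℱ : Filtration ℝ m0} {σ τ : Ω → ℝ≥0∞}

def IsENNRealStoppingTime (ℱ : Filtration ℝ m0) (τ : Ω → ℝ≥0∞) : Prop :=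
  ∀ t : ℝ, MeasurableSet[ℱ t] {ω | τ ω ≤ ENNReal.ofReal t}

def IsStoppedSigmaAlgebra (ℱ : Filtration ℝ m0) (τ : Ω → ℝ≥0∞) (G : MeasurableSpace Ω) :
    Prop :=
  ∀ A : Set Ω, MeasurableSet[G] A ↔
    MeasurableSet[m0] A ∧ ∀ t : ℝ, MeasurableSet[ℱ t] (A ∩ {ω | τ ω ≤ ENNReal.ofReal t})

theorem IsENNRealStoppingTime.measurableSet_le_inter (hτ : IsENNRealStoppingTime ℱ τ)
    (x : ℝ≥0∞) (t : ℝ) :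
    MeasurableSet[ℱ t] ({ω | τ ω ≤ x} ∩ {ω | τ ω ≤ ENNReal.ofReal t}) := by
  obtain rfl | hx := eq_or_ne x ⊤
  · simpa using hτ t
  have : {ω | τ ω ≤ x} ∩ {ω | τ ω ≤ ENNReal.ofReal t} =
      {ω | τ ω ≤ ENNReal.ofReal (min x.toReal t)} := by
    ext ω
    simp [ENNReal.ofReal_min, ENNReal.ofReal_toReal hx]
  exact this ▸ ℱ.mono (min_le_right _ _) _ (hτ _)

theorem IsENNRealStoppingTime.measurable (hτ : IsENNRealStoppingTime ℱ τ) : Measurable τ := by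
  refine measurable_of_Iic fun x => ?_
  obtain rfl | hx := eq_or_ne x ⊤
  · simp
  · simpa [Set.preimage, ENNReal.ofReal_toReal hx] using ℱ.le _ _ (hτ x.toReal)

theorem IsStoppedSigmaAlgebra.le {G : MeasurableSpace Ω} (hG : IsStoppedSigmaAlgebra ℱ τ G) :
    G ≤ m0 :=
  fun A hA => ((hG A).1 hA).1

theorem IsStoppedSigmaAlgebra.measurable {G : MeasurableSpace Ω}
    (hG : IsStoppedSigmaAlgebra ℱ τ G) (hτ : IsENNRealStoppingTime ℱ τ) : Measurable[G] τ :=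
  measurable_of_Iic (mδ := G) fun x =>
    (hG _).2 ⟨hτ.measurable measurableSet_Iic, hτ.measurableSet_le_inter x⟩

theorem IsStoppedSigmaAlgebra.mono {G H : MeasurableSpace Ω}
    (hG : IsStoppedSigmaAlgebra ℱ σ G) (hH : IsStoppedSigmaAlgebra ℱ τ H)
    (hτ : IsENNRealStoppingTime ℱ τ) (hστ : σ ≤ τ) :
    G ≤ H := by
  intro A hA
  obtain ⟨hAm, hAσ⟩ := (hG A).1 hA
  refine (hH A).2 ⟨hAm, fun t => ?_⟩
  have : A ∩ {ω | τ ω ≤ ENNReal.ofReal t} =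
      (A ∩ {ω | σ ω ≤ ENNReal.ofReal t}) ∩ {ω | τ ω ≤ ENNReal.ofReal t} := by
    ext ω
    simp only [Set.mem_inter_iff, Set.mem_ofPred_eq]
    exact ⟨fun h => ⟨⟨h.1, (hστ ω).trans h.2⟩, h.2⟩, fun h => ⟨h.1.1, h.2⟩⟩
  exact this ▸ (hAσ t).inter (hτ t)

theorem IsStoppedSigmaAlgebra.measurable_of_le {G H : MeasurableSpace Ω}
    (hH : IsStoppedSigmaAlgebra ℱ τ H) (hG : IsStoppedSigmaAlgebra ℱ σ G)
    (hσ : IsENNRealStoppingTime ℱ σ) (hτ : IsENNRealStoppingTime ℱ τ) (hστ : σ ≤ τ) :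
    Measurable[H] σ :=
  (hG.measurable hσ).mono (hG.mono hH hτ hστ) le_rfl

end StoppedSigmaAlgebra

theorem stmt4_general {Ω : Type} {m0 : MeasurableSpace Ω} (μ : Measure Ω) [IsProbabilityMeasure μ]
    (ℱ : Filtration ℝ m0) (τ : ℕ → Ω → ℝ≥0∞)
    (hτmeas : ∀ n, ∀ t : ℝ, MeasurableSet[ℱ t] {ω | τ n ω ≤ ENNReal.ofReal t})
    (hτmono : ∀ ω, Monotone fun n => τ n ω)
    (δ : ℕ → ℝ) (hδpos : ∀ k, 1 ≤ k → 0 < δ k)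
    (hδdiv : Tendsto (fun n => ∑ k ∈ Finset.Icc 1 n, δ k) atTop atTop)
    -- `𝔾 k` is the stopped σ-algebra `F_{τ_k}`:
    (𝔾 : ℕ → MeasurableSpace Ω)
    (h𝔾 : ∀ k, ∀ A : Set Ω, MeasurableSet[𝔾 k] A ↔
      (MeasurableSet A ∧ ∀ t : ℝ, MeasurableSet[ℱ t] (A ∩ {ω | τ k ω ≤ ENNReal.ofReal t})))
    (hcond : ∀ k : ℕ, 1 ≤ k → ∀ᵐ ω ∂μ, τ (k-1) ω < ⊤ →
      (1/4 : ℝ) ≤ (μ[(Set.indicator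
        {ω' | ENNReal.ofReal (δ k) ≤ τ k ω' - τ (k-1) ω'} (fun _ => (1:ℝ))) | 𝔾 (k-1)]) ω) :
    ∀ᵐ ω ∂μ, (∀ k, τ k ω < ⊤) → ∑' k : ℕ, (τ (k+1) ω - τ k ω) = ⊤ := by
  have hτ : ∀ n, IsENNRealStoppingTime ℱ (τ n) := hτmeas
  have h𝔾τ : ∀ n, IsStoppedSigmaAlgebra ℱ (τ n) (𝔾 n) := h𝔾
  set s : ℕ → Set Ω := fun n => {ω | ENNReal.ofReal (δ n) ≤ τ n ω - τ (n - 1) ω}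
  set c : ℕ → ℝ := fun k => min (δ (k + 1)) 1
  have hc0 : ∀ k, 0 ≤ c k := fun k => le_min (hδpos _ k.succ_pos).le zero_le_one
  let 𝒢 : Filtration ℕ m0 :=
    ⟨𝔾, fun j k hjk => (h𝔾τ j).mono (h𝔾τ k) (hτ k) (hτmono · hjk), fun k => (h𝔾τ k).le⟩
  have hs : ∀ n, MeasurableSet[𝒢 n] (s n) := fun n =>
    measurableSet_le measurable_const (((h𝔾τ n).measurable (hτ n)).sub
      ((h𝔾τ n).measurable_of_le (h𝔾τ (n - 1)) (hτ (n - 1)) (hτ n) (hτmono · (n.sub_le 1))))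
  have hc : Tendsto (fun n => ∑ k ∈ Finset.range n, c k) atTop atTop :=
    tendsto_sum_range_min_one_atTop (fun k => (hδpos _ k.succ_pos).le)
      (hδdiv.congr fun n => by rw [Finset.range_eq_Ico, Finset.sum_Ico_add' δ 0 n 1]; rfl)
  have hcond' : ∀ᵐ ω ∂μ, ∀ k, τ k ω < ⊤ →
      (1 / 4 : ℝ) ≤ (μ[(s (k + 1)).indicator (1 : Ω → ℝ) | 𝒢 k]) ω :=
    ae_all_iff.2 fun k => hcond (k + 1) k.succ_pos
  filter_upwards [tendsto_sum_mul_indicator_atTop_iff (μ := μ) hs (R := 1) hc0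
    (fun k => min_le_right _ _), hcond'] with ω hlevy hω hfin
  refine ENNReal.tsum_eq_top_of_ofReal_le (fun k => mul_nonneg (hc0 k)
    (Set.indicator_nonneg (fun _ _ => zero_le_one) ω)) (fun k => ?_) (hlevy.2 ?_)
  · by_cases hk : ω ∈ s (k + 1)
    · rw [Set.indicator_of_mem hk, mul_one]
      exact (ENNReal.ofReal_le_ofReal (min_le_left _ 1)).trans hk
    · simp [hk]
  · refine tendsto_atTop_mono (fun n => ?_) (hc.const_mul_atTop (by norm_num : (0 : ℝ) < 1 / 4))
    rw [Finset.mul_sum]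
    exact Finset.sum_le_sum fun k _ => by nlinarith [hω k (hfin k), hc0 k]

/-- Let `(τ_k)_{k ≥ 0}` be an increasing sequence of (possibly infinite)
stopping times and `(δ_k)_{k ≥ 1}` positive reals with `Σ δ_k = ∞`. If for every `k ≥ 1`,
`P(τ_k - τ_{k-1} ≥ δ_k | F_{τ_{k-1}}) ≥ 1/4` a.s. on `{τ_{k-1} < ∞}`, then
`Σ_k (τ_k - τ_{k-1}) = ∞` a.s. on `{τ_k < ∞ for all k}`. -/
theorem stmt4 {Ω : Type} {m0 : MeasurableSpace Ω} (μ : Measure Ω) [IsProbabilityMeasure μ]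
    (ℱ : Filtration ℝ m0) (τ : ℕ → Ω → ℝ≥0∞)
    (hτmeas : ∀ n, ∀ t : ℝ, MeasurableSet[ℱ t] {ω | τ n ω ≤ ENNReal.ofReal t})
    (hτmono : ∀ ω, Monotone fun n => τ n ω)
    (δ : ℕ → ℝ) (hδpos : ∀ k, 1 ≤ k → 0 < δ k)
    (hδdiv : Tendsto (fun n => ∑ k ∈ Finset.Icc 1 n, δ k) atTop atTop)
    -- `𝔾 k` is the stopped σ-algebra `F_{τ_k}`:
    (𝔾 : ℕ → MeasurableSpace Ω) (h𝔾le : ∀ k, 𝔾 k ≤ m0)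
    (h𝔾 : ∀ k, ∀ A : Set Ω, MeasurableSet[𝔾 k] A ↔
      (MeasurableSet A ∧ ∀ t : ℝ, MeasurableSet[ℱ t] (A ∩ {ω | τ k ω ≤ ENNReal.ofReal t})))
    (hcond : ∀ k : ℕ, 1 ≤ k → ∀ᵐ ω ∂μ, τ (k-1) ω < ⊤ →
      (1/4 : ℝ) ≤ (μ[(Set.indicator
        {ω' | ENNReal.ofReal (δ k) ≤ τ k ω' - τ (k-1) ω'} (fun _ => (1:ℝ))) | 𝔾 (k-1)]) ω) :
    ∀ᵐ ω ∂μ, (∀ k, τ k ω < ⊤) → ∑' k : ℕ, (τ (k+1) ω - τ k ω) = ⊤ :=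
  stmt4_general μ ℱ τ hτmeas hτmono δ hδpos hδdiv 𝔾 h𝔾 hcond
end

section
/- Let W be a standard Brownian motion on [0,1] and α ∈ (0,1/2). There exist positive constants k₁, k₂ depending only on α such that P(‖W‖_{α;[0,1]} ≥ u) ≤ k₁ exp(−k₂ u²) for all u ≥ 0, where ‖W‖_{α;[0,1]} = sup_{0≤s<t≤1} |W(t)−W(s)|/(t−s)^α + sup_{0≤t≤1} |W(t)|. -/
open MeasureTheory ProbabilityTheory Filter

/-- A standard one-dimensional Brownian motion: continuous paths, starts at `0`,
independent Gaussian increments. -/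
def IsBrownianMotion {Ω : Type} [MeasurableSpace Ω] (μ : Measure Ω)
    (W : ℝ → Ω → ℝ) : Prop :=
  (∀ ω, Continuous fun t => W t ω) ∧ (∀ ω, W 0 ω = 0) ∧
  (∀ t, Measurable (W t)) ∧
  (∀ s t : ℝ, 0 ≤ s → s ≤ t →
    Measure.map (fun ω => W t ω - W s ω) μ = gaussianReal 0 (Real.toNNReal (t - s))) ∧
  (∀ n : ℕ, ∀ t : ℕ → ℝ, (∀ i, 0 ≤ t i) → Monotone t →
    iIndepFun
      (fun i : Fin n => fun ω => W (t (i+1)) ω - W (t i) ω) μ)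

/-- The Hölder-`α` norm of a path `η` on the interval `[a,b]`. -/
noncomputable def holderNorm (α a b : ℝ) (η : ℝ → ℝ) : ℝ :=
  (⨆ q : {q : ℝ × ℝ // a ≤ q.1 ∧ q.1 < q.2 ∧ q.2 ≤ b},
      |η (q : ℝ × ℝ).2 - η (q : ℝ × ℝ).1| / ((q : ℝ × ℝ).2 - (q : ℝ × ℝ).1) ^ α) +
    ⨆ t : Set.Icc a b, |η (t : ℝ)|

/-!
Chaining: if a continuous path `f` with `f 0 = 0` has all its increments over level-`n` dyadic
intervals bounded by `c * r ^ n` with `r ≤ 2 ^ (-α)`, then approximating `s < t` by dyadic points of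
the level `n` with `2 ^ (-n-1) < t - s ≤ 2 ^ (-n)` bounds its Hölder norm by a constant multiple
of `c`. For Brownian motion each of the `2 ^ n` increments of level `n` is `N(0, 2 ^ (-n))`, so it
exceeds `c * 2 ^ (-α n)` with probability at most `2 exp (-(c ^ 2 / 2) (2 ^ (1 - 2α)) ^ n)`. As
`α < 1/2`, the union bound over all dyadic intervals sums to `4 exp (-c ^ 2 / 2)` once `c` is
large; for small `c` the probability is at most `1`.
-/

open Real Set Topology
open scoped NNReal ENNReal

noncomputable def dyadicFloor (n : ℕ) (x : ℝ) : ℝ := ⌊x * 2 ^ n⌋₊ / 2 ^ n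

lemma dyadicFloor_nonneg (n : ℕ) (x : ℝ) : 0 ≤ dyadicFloor n x := by
  unfold dyadicFloor; positivity

lemma dyadicFloor_le {x : ℝ} (hx : 0 ≤ x) (n : ℕ) : dyadicFloor n x ≤ x := by
  rw [dyadicFloor, div_le_iff₀ (by positivity)]
  exact Nat.floor_le (by positivity)

lemma lt_dyadicFloor_add (x : ℝ) (n : ℕ) : x < dyadicFloor n x + (2 ^ n)⁻¹ := by
  rw [dyadicFloor, inv_eq_one_div, ← add_div, lt_div_iff₀ (by positivity)]
  exact Nat.lt_floor_add_one _

lemma tendsto_dyadicFloor {x : ℝ} (hx : 0 ≤ x) :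
    Tendsto (fun n ↦ dyadicFloor n x) atTop (𝓝 x) := by
  have h : Tendsto (fun n : ℕ ↦ x - ((2 : ℝ) ^ n)⁻¹) atTop (𝓝 x) := by
    simpa using tendsto_const_nhds.sub
      (tendsto_inv_atTop_zero.comp (tendsto_pow_atTop_atTop_of_one_lt (one_lt_two (α := ℝ))))
  refine tendsto_of_tendsto_of_tendsto_of_le_of_le h tendsto_const_nhds (fun n ↦ ?_)
    (dyadicFloor_le hx)
  linarith [lt_dyadicFloor_add x n]

def HasDyadicIncrementBound (f : ℝ → ℝ) (c r : ℝ) : Prop :=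
  ∀ n k : ℕ, k + 1 ≤ 2 ^ n → |f ((k + 1) / 2 ^ n) - f (k / 2 ^ n)| ≤ c * r ^ n

namespace HasDyadicIncrementBound

variable {f : ℝ → ℝ} {c r : ℝ}

lemma abs_sub_le_of_le_succ (H : HasDyadicIncrementBound f c r) (hc : 0 ≤ c) (hr : 0 ≤ r)
    {n a b : ℕ} (hab : a ≤ b) (hba : b ≤ a + 1) (hb : b ≤ 2 ^ n) :
    |f (b / 2 ^ n) - f (a / 2 ^ n)| ≤ c * r ^ n := by
  obtain rfl | rfl : b = a ∨ b = a + 1 := by omega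
  · rw [sub_self, abs_zero]; positivity
  · exact_mod_cast H n a hb

lemma abs_dyadicFloor_succ_sub_le (H : HasDyadicIncrementBound f c r) (hc : 0 ≤ c)
    (hr : 0 ≤ r) {x : ℝ} (hx : x ∈ Icc (0 : ℝ) 1) (n : ℕ) :
    |f (dyadicFloor (n + 1) x) - f (dyadicFloor n x)| ≤ c * r ^ (n + 1) := by
  set m := ⌊x * 2 ^ (n + 1)⌋₊
  have hhalf : ⌊x * 2 ^ n⌋₊ = m / 2 := by
    rw [← Nat.floor_div_ofNat, pow_succ, ← mul_assoc, mul_div_cancel_right₀ _ two_ne_zero]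
  have hm : m ≤ 2 ^ (n + 1) :=
    Nat.floor_le_of_le (by push_cast; nlinarith [hx.2, pow_pos (two_pos (α := ℝ)) (n + 1)])
  have hfloor : dyadicFloor n x = ((2 * (m / 2) : ℕ) : ℝ) / 2 ^ (n + 1) := by
    rw [dyadicFloor, hhalf, pow_succ]; push_cast; field_simp
  rw [hfloor]
  exact H.abs_sub_le_of_le_succ hc hr (by omega) (by omega) hm

lemma abs_sub_dyadicFloor_le (H : HasDyadicIncrementBound f c r) (hc : 0 ≤ c) (hr0 : 0 ≤ r)
    (hr1 : r < 1) (hf : ContinuousOn f (Icc 0 1)) {x : ℝ} (hx : x ∈ Icc (0 : ℝ) 1) (n : ℕ) :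
    |f x - f (dyadicFloor n x)| ≤ c * r ^ (n + 1) / (1 - r) := by
  have hmem : ∀ n, dyadicFloor n x ∈ Icc (0 : ℝ) 1 := fun n ↦
    ⟨dyadicFloor_nonneg n x, (dyadicFloor_le hx.1 n).trans hx.2⟩
  have hlim : Tendsto (fun n ↦ f (dyadicFloor n x)) atTop (𝓝 (f x)) :=
    (hf x hx).tendsto.comp (tendsto_nhdsWithin_iff.2 ⟨tendsto_dyadicFloor hx.1, .of_forall hmem⟩)
  have hstep : ∀ n, dist (f (dyadicFloor n x)) (f (dyadicFloor (n + 1) x)) ≤ c * r * r ^ n := by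
    intro n
    rw [Real.dist_eq, abs_sub_comm, mul_assoc, ← pow_succ']
    exact H.abs_dyadicFloor_succ_sub_le hc hr0 hx n
  rw [abs_sub_comm, ← Real.dist_eq, pow_succ', ← mul_assoc]
  exact dist_le_of_le_geometric_of_tendsto r (c * r) hr1 hstep hlim n

lemma abs_sub_le_mul_rpow (H : HasDyadicIncrementBound f c r) {α : ℝ} (hα : 0 ≤ α) (hc : 0 ≤ c)
    (hr0 : 0 ≤ r) (hr1 : r < 1) (hrα : r ≤ 2 ^ (-α)) (hf : ContinuousOn f (Icc 0 1)) {s t : ℝ}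
    (hs : 0 ≤ s) (hst : s < t) (ht : t ≤ 1) :
    |f t - f s| ≤ 2 ^ α * (1 + r) / (1 - r) * c * (t - s) ^ α := by
  have hd : 0 < t - s := sub_pos.2 hst
  obtain ⟨n, hn, hn'⟩ := exists_nat_pow_near (one_le_one_div hd (by linarith)) (one_lt_two (α := ℝ))
  have h2n : (0 : ℝ) < 2 ^ n := by positivity
  have hdn : (t - s) * 2 ^ n ≤ 1 := by rwa [le_div_iff₀ hd, mul_comm] at hn
  have hdn' : ((2 : ℝ) ^ n)⁻¹ ≤ 2 * (t - s) := by
    rw [div_lt_iff₀ hd, pow_succ] at hn'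
    rw [inv_le_iff_one_le_mul₀ h2n]; linarith
  have hab : ⌊s * 2 ^ n⌋₊ ≤ ⌊t * 2 ^ n⌋₊ := Nat.floor_mono (by gcongr)
  have hba : ⌊t * 2 ^ n⌋₊ ≤ ⌊s * 2 ^ n⌋₊ + 1 := by
    rw [← Nat.floor_add_one (by positivity)]; exact Nat.floor_mono (by nlinarith)
  have hb : ⌊t * 2 ^ n⌋₊ ≤ 2 ^ n := Nat.floor_le_of_le (by push_cast; nlinarith)
  have hmid : |f (dyadicFloor n t) - f (dyadicFloor n s)| ≤ c * r ^ n :=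
    H.abs_sub_le_of_le_succ hc hr0 hab hba hb
  have ht' := H.abs_sub_dyadicFloor_le hc hr0 hr1 hf ⟨hs.trans hst.le, ht⟩ n
  have hs' := H.abs_sub_dyadicFloor_le hc hr0 hr1 hf ⟨hs, hst.le.trans ht⟩ n
  have hrn : r ^ n ≤ 2 ^ α * (t - s) ^ α := calc
    r ^ n ≤ ((2 : ℝ) ^ (-α)) ^ n := pow_le_pow_left₀ hr0 hrα n
    _ = (((2 : ℝ) ^ n)⁻¹) ^ α := by
      rw [← Real.rpow_mul_natCast zero_le_two, Real.inv_rpow h2n.le,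
        ← Real.rpow_natCast_mul zero_le_two, ← Real.rpow_neg zero_le_two]
      ring_nf
    _ ≤ (2 * (t - s)) ^ α := Real.rpow_le_rpow (by positivity) hdn' hα
    _ = 2 ^ α * (t - s) ^ α := Real.mul_rpow zero_le_two hd.le
  have h1r : 0 < 1 - r := by linarith
  calc |f t - f s|
      ≤ |f t - f (dyadicFloor n t)| + |f (dyadicFloor n t) - f (dyadicFloor n s)|
          + |f s - f (dyadicFloor n s)| := by
        have h₁ := abs_sub_le (f t) (f (dyadicFloor n t)) (f s)
        have h₂ := abs_sub_le (f (dyadicFloor n t)) (f (dyadicFloor n s)) (f s)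
        rw [abs_sub_comm (f (dyadicFloor n s))] at h₂
        linarith
    _ ≤ c * r ^ (n + 1) / (1 - r) + c * r ^ n + c * r ^ (n + 1) / (1 - r) := by gcongr
    _ = (1 + r) / (1 - r) * c * r ^ n := by field_simp; ring
    _ ≤ (1 + r) / (1 - r) * c * (2 ^ α * (t - s) ^ α) := by gcongr
    _ = 2 ^ α * (1 + r) / (1 - r) * c * (t - s) ^ α := by ring

end HasDyadicIncrementBound

lemma holderNorm_le_of_abs_sub_le {α M : ℝ} {f : ℝ → ℝ} (hα : 0 ≤ α) (hf0 : f 0 = 0)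
    (hf : ∀ s t, 0 ≤ s → s < t → t ≤ 1 → |f t - f s| ≤ M * (t - s) ^ α) :
    holderNorm α 0 1 f ≤ 2 * M := by
  have hM : 0 ≤ M := by simpa using (abs_nonneg _).trans (hf 0 1 le_rfl one_pos le_rfl)
  have hincr : (⨆ q : {q : ℝ × ℝ // 0 ≤ q.1 ∧ q.1 < q.2 ∧ q.2 ≤ 1},
      |f (q : ℝ × ℝ).2 - f (q : ℝ × ℝ).1| / ((q : ℝ × ℝ).2 - (q : ℝ × ℝ).1) ^ α) ≤ M :=
    Real.iSup_le (fun ⟨⟨s, t⟩, hs, hst, ht⟩ ↦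
      (div_le_iff₀ (Real.rpow_pos_of_pos (sub_pos.2 hst) α)).2 (hf s t hs hst ht)) hM
  have hsup : ⨆ t : Icc (0 : ℝ) 1, |f t| ≤ M := by
    refine Real.iSup_le (fun ⟨t, ht0, ht1⟩ ↦ ?_) hM
    obtain rfl | ht0 := ht0.eq_or_lt
    · simpa [hf0] using hM
    calc |f t| = |f t - f 0| := by rw [hf0, sub_zero]
      _ ≤ M * (t - 0) ^ α := hf 0 t le_rfl ht0 ht1
      _ ≤ M := mul_le_of_le_one_right hM (Real.rpow_le_one (by linarith) (by linarith) hα)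
  rw [holderNorm]
  linarith

lemma HasDyadicIncrementBound.holderNorm_le {f : ℝ → ℝ} {c r α : ℝ}
    (H : HasDyadicIncrementBound f c r) (hα : 0 ≤ α) (hc : 0 ≤ c)
    (hr0 : 0 ≤ r) (hr1 : r < 1) (hrα : r ≤ 2 ^ (-α)) (hf : ContinuousOn f (Icc 0 1))
    (hf0 : f 0 = 0) :
    holderNorm α 0 1 f ≤ 2 * (2 ^ α * (1 + r) / (1 - r)) * c := by
  rw [mul_assoc]
  exact holderNorm_le_of_abs_sub_le hα hf0 fun s t hs hst ht ↦
    H.abs_sub_le_mul_rpow hα hc hr0 hr1 hrα hf hs hst ht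

lemma hasSubgaussianMGF_of_map_eq_gaussianReal {Ω : Type*} {mΩ : MeasurableSpace Ω}
    {μ : Measure Ω} {X : Ω → ℝ} {v : ℝ≥0} (hX : AEMeasurable X μ)
    (h : μ.map X = gaussianReal 0 v) : HasSubgaussianMGF X v μ := by
  rw [← HasSubgaussianMGF.id_map_iff hX, h]
  exact ⟨integrable_exp_mul_gaussianReal, fun t ↦ by simp [mgf_id_gaussianReal]⟩

lemma ProbabilityTheory.HasSubgaussianMGF.measure_abs_ge_le {Ω : Type*} {mΩ : MeasurableSpace Ω}
    {μ : Measure Ω} [IsFiniteMeasure μ] {X : Ω → ℝ} {v : ℝ≥0} (h : HasSubgaussianMGF X v μ)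
    {ε : ℝ} (hε : 0 ≤ ε) :
    μ {ω | ε ≤ |X ω|} ≤ ENNReal.ofReal (2 * exp (-ε ^ 2 / (2 * v))) := by
  have hunion : {ω | ε ≤ |X ω|} = {ω | ε ≤ X ω} ∪ {ω | ε ≤ (-X) ω} := by
    ext ω; simp [le_abs]
  rw [← ofReal_measureReal, hunion, two_mul]
  gcongr
  exact (measureReal_union_le _ _).trans
    (add_le_add (h.measure_ge_le hε) (h.neg.measure_ge_le hε))

lemma IsBrownianMotion.measure_abs_sub_ge_le {Ω : Type} [MeasurableSpace Ω] {μ : Measure Ω}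
    [IsFiniteMeasure μ] {W : ℝ → Ω → ℝ} (hW : IsBrownianMotion μ W) {s t : ℝ} (hs : 0 ≤ s)
    (hst : s ≤ t) {ε : ℝ} (hε : 0 ≤ ε) :
    μ {ω | ε ≤ |W t ω - W s ω|} ≤ ENNReal.ofReal (2 * exp (-ε ^ 2 / (2 * (t - s)))) := by
  have h := hasSubgaussianMGF_of_map_eq_gaussianReal
    ((hW.2.2.1 t).sub (hW.2.2.1 s)).aemeasurable (hW.2.2.2.1 s t hs hst)
  simpa [Real.coe_toNNReal _ (sub_nonneg.2 hst)] using h.measure_abs_ge_le hε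

lemma two_pow_mul_exp_neg_mul_pow_le {q x : ℝ} (hq : 1 ≤ q) (hx : 3 ≤ x * (q - 1)) (n : ℕ) :
    2 ^ n * (2 * exp (-(x * q ^ n))) ≤ 2 * exp (-x) * 2⁻¹ ^ n := by
  have hx0 : 0 ≤ x := by nlinarith
  have hbernoulli : 1 + n * (q - 1) ≤ q ^ n := by
    simpa using one_add_mul_le_pow (show -2 ≤ q - 1 by linarith) n
  have h4 : 4 ≤ exp (x * (q - 1)) := by linarith [add_one_le_exp (x * (q - 1))]
  calc 2 ^ n * (2 * exp (-(x * q ^ n)))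
      ≤ 2 ^ n * (2 * exp (-x - n * (x * (q - 1)))) := by gcongr; nlinarith
    _ = 2 * exp (-x) * (2 * (exp (x * (q - 1)))⁻¹) ^ n := by
      rw [exp_sub, exp_nat_mul, mul_pow, inv_pow]; ring
    _ ≤ 2 * exp (-x) * (2 * 4⁻¹) ^ n := by gcongr
    _ = 2 * exp (-x) * 2⁻¹ ^ n := by norm_num

lemma tsum_two_pow_mul_ofReal_exp_neg_mul_pow_le {q x : ℝ} (hq : 1 ≤ q) (hx : 3 ≤ x * (q - 1)) :
    ∑' n : ℕ, 2 ^ n * ENNReal.ofReal (2 * exp (-(x * q ^ n))) ≤ ENNReal.ofReal (4 * exp (-x)) :=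
  calc ∑' n : ℕ, 2 ^ n * ENNReal.ofReal (2 * exp (-(x * q ^ n)))
      ≤ ∑' n : ℕ, ENNReal.ofReal (2 * exp (-x)) * 2⁻¹ ^ n := by
        refine ENNReal.tsum_le_tsum fun n ↦ ?_
        calc 2 ^ n * ENNReal.ofReal (2 * exp (-(x * q ^ n)))
            = ENNReal.ofReal (2 ^ n * (2 * exp (-(x * q ^ n)))) := by
              rw [ENNReal.ofReal_mul (by positivity : (0 : ℝ) ≤ 2 ^ n),
                ENNReal.ofReal_pow zero_le_two, ENNReal.ofReal_ofNat]
          _ ≤ ENNReal.ofReal (2 * exp (-x) * 2⁻¹ ^ n) :=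
              ENNReal.ofReal_le_ofReal (two_pow_mul_exp_neg_mul_pow_le hq hx n)
          _ = ENNReal.ofReal (2 * exp (-x)) * 2⁻¹ ^ n := by
              rw [ENNReal.ofReal_mul (by positivity), ENNReal.ofReal_pow (by norm_num),
                ENNReal.ofReal_inv_of_pos two_pos, ENNReal.ofReal_ofNat]
    _ = ENNReal.ofReal (4 * exp (-x)) := by
      rw [ENNReal.tsum_mul_left, ENNReal.tsum_geometric, ENNReal.one_sub_inv_two, inv_inv,
        ← ENNReal.ofReal_ofNat 2, ← ENNReal.ofReal_mul (by positivity)]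
      ring_nf

theorem IsBrownianMotion.measure_holderNorm_gt_le {Ω : Type} [MeasurableSpace Ω]
    {μ : Measure Ω} [IsFiniteMeasure μ] {W : ℝ → Ω → ℝ} (hW : IsBrownianMotion μ W)
    {α r c : ℝ} (hα : 0 ≤ α) (hr0 : 0 ≤ r) (hr1 : r < 1) (hrα : r ≤ 2 ^ (-α)) (hc : 0 ≤ c)
    (hcr : 3 ≤ c ^ 2 / 2 * (2 * r ^ 2 - 1)) :
    μ {ω | 2 * (2 ^ α * (1 + r) / (1 - r)) * c < holderNorm α 0 1 (fun t ↦ W t ω)} ≤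
      ENNReal.ofReal (4 * exp (-(c ^ 2 / 2))) := by
  set E : ℕ → ℕ → Set Ω := fun n k ↦
    {ω | c * r ^ n ≤ |W ((k + 1) / 2 ^ n) ω - W (k / 2 ^ n) ω|}
  have hsub : {ω | 2 * (2 ^ α * (1 + r) / (1 - r)) * c < holderNorm α 0 1 (fun t ↦ W t ω)} ⊆
      ⋃ n, ⋃ k ∈ Finset.range (2 ^ n), E n k := by
    intro ω hω
    by_contra hω'
    simp only [E, mem_iUnion, Finset.mem_range, not_exists] at hω'
    have H : HasDyadicIncrementBound (fun t ↦ W t ω) c r := fun n k hk ↦ (not_le.1 (hω' n k hk)).le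
    exact hω.not_ge (H.holderNorm_le hα hc hr0 hr1 hrα (hW.1 ω).continuousOn (hW.2.1 ω))
  have hE : ∀ n k : ℕ, μ (E n k) ≤ ENNReal.ofReal (2 * exp (-(c ^ 2 / 2 * (2 * r ^ 2) ^ n))) := by
    intro n k
    refine (hW.measure_abs_sub_ge_le (by positivity) (by gcongr; linarith)
      (by positivity)).trans_eq ?_
    congr
    field_simp
    ring
  calc _ ≤ μ (⋃ n, ⋃ k ∈ Finset.range (2 ^ n), E n k) := measure_mono hsub
    _ ≤ ∑' n, ∑ k ∈ Finset.range (2 ^ n), μ (E n k) :=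
      (measure_iUnion_le _).trans (ENNReal.tsum_le_tsum fun n ↦ measure_biUnion_finset_le _ _)
    _ ≤ ∑' n : ℕ, 2 ^ n * ENNReal.ofReal (2 * exp (-(c ^ 2 / 2 * (2 * r ^ 2) ^ n))) := by
      refine ENNReal.tsum_le_tsum fun n ↦ ?_
      refine (Finset.sum_le_card_nsmul (Finset.range (2 ^ n)) _ _ fun k _ ↦ hE n k).trans_eq ?_
      rw [Finset.card_range, nsmul_eq_mul, Nat.cast_pow, Nat.cast_ofNat]
    _ ≤ ENNReal.ofReal (4 * exp (-(c ^ 2 / 2))) :=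
      tsum_two_pow_mul_ofReal_exp_neg_mul_pow_le (by nlinarith) hcr

theorem IsBrownianMotion.measureReal_le_holderNorm_le {Ω : Type} [MeasurableSpace Ω]
    {μ : Measure Ω} [IsProbabilityMeasure μ] {W : ℝ → Ω → ℝ} (hW : IsBrownianMotion μ W)
    {α r c u : ℝ} (hα : 0 ≤ α) (hr0 : 0 ≤ r) (hr1 : r < 1) (hrα : r ≤ 2 ^ (-α))
    (hq : 1 < 2 * r ^ 2) (hc : 0 ≤ c) (hcu : 4 * (2 ^ α * (1 + r) / (1 - r)) * c ≤ u) :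
    μ.real {ω | u ≤ holderNorm α 0 1 (fun t ↦ W t ω)} ≤
      (4 + exp (3 / (2 * r ^ 2 - 1))) * exp (-(c ^ 2 / 2)) := by
  set K := 2 ^ α * (1 + r) / (1 - r)
  by_cases hcr : 3 ≤ c ^ 2 / 2 * (2 * r ^ 2 - 1)
  · have hc0 : 0 < c := lt_of_le_of_ne hc (by rintro rfl; norm_num at hcr)
    have hK : 0 < K := by have := sub_pos.2 hr1; positivity
    have hKc : 2 * K * c < u := by nlinarith
    calc μ.real {ω | u ≤ holderNorm α 0 1 (fun t ↦ W t ω)}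
        ≤ μ.real {ω | 2 * K * c < holderNorm α 0 1 (fun t ↦ W t ω)} :=
          measureReal_mono fun ω hω ↦ hKc.trans_le hω
      _ ≤ 4 * exp (-(c ^ 2 / 2)) := ENNReal.toReal_le_of_le_ofReal (by positivity)
          (hW.measure_holderNorm_gt_le hα hr0 hr1 hrα hc hcr)
      _ ≤ _ := by gcongr; linarith [exp_pos (3 / (2 * r ^ 2 - 1))]
  · have hsmall : c ^ 2 / 2 ≤ 3 / (2 * r ^ 2 - 1) :=
      (le_div_iff₀ (by linarith)).2 (not_le.1 hcr).le
    calc μ.real {ω | u ≤ holderNorm α 0 1 (fun t ↦ W t ω)} ≤ 1 := measureReal_le_one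
      _ = exp (3 / (2 * r ^ 2 - 1)) * exp (-(3 / (2 * r ^ 2 - 1))) := by rw [← exp_add]; simp
      _ ≤ (4 + exp (3 / (2 * r ^ 2 - 1))) * exp (-(c ^ 2 / 2)) := by
        gcongr ?_ * exp ?_
        · linarith
        · linarith

/-- Gaussian concentration for the Hölder norm of Brownian motion.
For `α ∈ (0,1/2)` there are positive constants `k₁, k₂` depending only on `α` such that
for any standard Brownian motion `W`, `P(‖W‖_{α;[0,1]} ≥ u) ≤ k₁ exp(-k₂ u²)` for all
`u ≥ 0`. -/
theorem stmt12 (α : ℝ) (hα0 : 0 < α) (hα1 : α < 1/2) :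
    ∃ k₁ k₂ : ℝ, 0 < k₁ ∧ 0 < k₂ ∧
      ∀ (Ω : Type) (_ : MeasurableSpace Ω) (μ : Measure Ω), IsProbabilityMeasure μ →
      ∀ W : ℝ → Ω → ℝ, IsBrownianMotion μ W →
      ∀ u : ℝ, 0 ≤ u →
        (μ {ω | u ≤ holderNorm α 0 1 (fun t => W t ω)}).toReal ≤
          k₁ * Real.exp (-k₂ * u ^ 2) := by
  set r : ℝ := 2 ^ (-α)
  have hr0 : 0 < r := by positivity
  have hr1 : r < 1 := Real.rpow_lt_one_of_one_lt_of_neg one_lt_two (by linarith)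
  have hq : 1 < 2 * r ^ 2 := by
    rw [← Real.rpow_natCast, ← Real.rpow_mul zero_le_two,
      ← Real.rpow_one_add' zero_le_two (by push_cast; linarith)]
    exact Real.one_lt_rpow one_lt_two (by push_cast; linarith)
  set K : ℝ := 2 ^ α * (1 + r) / (1 - r)
  have hK : 0 < K := by have := sub_pos.2 hr1; positivity
  refine ⟨4 + exp (3 / (2 * r ^ 2 - 1)), 1 / (32 * K ^ 2), by positivity, by positivity, ?_⟩
  intro Ω _ μ _ W hW u hu
  have hexp : -(1 / (32 * K ^ 2)) * u ^ 2 = -((u / (4 * K)) ^ 2 / 2) := by field_simp; ring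
  rw [hexp]
  exact hW.measureReal_le_holderNorm_le hα0.le hr0.le hr1 le_rfl hq (by positivity)
    (mul_div_cancel₀ u (by positivity)).le
end
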